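/- arXiv:1801.05043 — 2 statements merged into one kernel-verified Lean document; each statement's English description precedes it below -/
import Mathlib

section
/- Upper bound on the expected conductance (Lemma 3.1): if E[ξ^{-1}] < ∞, then for all n ≥ 1, E[C_n] ≤ E[ξ^{-1}]/n. -/
open MeasureTheory ProbabilityTheory Filter Topology Asymptotics
open scoped ENNReal

noncomputable section

/-- The root of the Galton--Watson tree, seen as the empty word. -/
def root : List ℕ := []

/-- `tcount ν n x ω` is the number of descendants at relative depth `n` of the vertex `x`
in the Galton--Watson tree built from the offspring variables `ν`; thus `#T_n[x] = tcount ν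
(n - |x|) x` and `#T_n = tcount ν n root`. -/
def tcount {Ω : Type*} (ν : List ℕ → Ω → ℕ) : ℕ → List ℕ → Ω → ℕ
  | 0, _, _ => 1
  | n + 1, x, ω => ∑ i ∈ Finset.range (ν x ω), tcount ν n (x ++ [i]) ω

/-- `verts ν n ω` is the set `T_n` of vertices (words) at depth `n` of the Galton--Watson
tree. -/
def verts {Ω : Type*} (ν : List ℕ → Ω → ℕ) : ℕ → Ω → Finset (List ℕ)
  | 0, _ => {root}
  | n + 1, ω => (verts ν n ω).biUnion fun x => (Finset.range (ν x ω)).image fun i => x ++ [i]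

/-- `gwCond m ν ξ n x ω` is the rescaled effective conductance between the vertex `x` and its
descendants at relative depth `n`, defined through the series--parallel recursion
`C_1(x) = m⁻¹ ∑_{i<ν_x} ξ_{xi}⁻¹` and
`C_{n+1}(x) = m⁻¹ ∑_{i<ν_x} C_n(xi) / (1 + ξ_{xi} C_n(xi))`.
In particular `C_n = gwCond m ν ξ n root` and `R_n = (gwCond m ν ξ n root)⁻¹`. -/
def gwCond {Ω : Type*} (m : ℝ) (ν : List ℕ → Ω → ℕ) (ξ : List ℕ → Ω → ℝ) :
    ℕ → List ℕ → Ω → ℝ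
  | 0, _, _ => 0
  | 1, x, ω => m⁻¹ * ∑ i ∈ Finset.range (ν x ω), (ξ (x ++ [i]) ω)⁻¹
  | n + 2, x, ω => m⁻¹ * ∑ i ∈ Finset.range (ν x ω),
      gwCond m ν ξ (n + 1) (x ++ [i]) ω /
        (1 + ξ (x ++ [i]) ω * gwCond m ν ξ (n + 1) (x ++ [i]) ω)

/-- Codomain of the joint family gathering the offspring variables `ν_x` (indexed by
`Sum.inl x`) and the edge weights `ξ_x` (indexed by `Sum.inr x`). -/
def codom : List ℕ ⊕ List ℕ → Type
  | .inl _ => ℕ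
  | .inr _ => ℝ

instance : ∀ i, MeasurableSpace (codom i)
  | .inl _ => inferInstanceAs (MeasurableSpace ℕ)
  | .inr _ => inferInstanceAs (MeasurableSpace ℝ)

/-- The joint family of the offspring variables and the edge weights, used to state that all
these random variables are globally independent. -/
def pairFam {Ω : Type*} (ν : List ℕ → Ω → ℕ) (ξ : List ℕ → Ω → ℝ) :
    (i : List ℕ ⊕ List ℕ) → Ω → codom i
  | .inl x => ν x
  | .inr x => ξ x

/-! Write `C_{n+1}(x) = m⁻¹ ∑_{i<ν_x} D_i`, where `D_i = C_n(xi) / (1 + ξ_{xi} C_n(xi))` is the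
conductance of `C_n(xi)` in series with the resistance `ξ_{xi}`. By Cauchy–Schwarz,
`D_i ≤ l² C_n(xi) + (1 - l)² ξ_{xi}⁻¹` for every `l`, and the right-hand side only involves
the variables at and below `xi`, hence is independent of `ν_x`. Wald's identity then gives
`E[C_{n+1}] ≤ l² E[C_n] + (1 - l)² E[ξ⁻¹]`, and `l = n / (n + 1)` closes the induction
`E[C_n] ≤ E[ξ⁻¹] / n`. Expectations are taken as lower Lebesgue integrals, so that no
integrability has to be carried through the induction. -/

open Finset

/-- The conductance of `c` in series with the resistance `t`, bounded via Cauchy–Schwarz. -/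
theorem div_one_add_mul_le {c t : ℝ} (hc : 0 ≤ c) (ht : 0 < t) (l : ℝ) :
    c / (1 + t * c) ≤ l ^ 2 * c + (1 - l) ^ 2 * t⁻¹ := by
  have hden : 0 < 1 + t * c := by positivity
  rw [div_le_iff₀ hden, ← sub_nonneg]
  have key : (l ^ 2 * c + (1 - l) ^ 2 * t⁻¹) * (1 + t * c) - c
      = t⁻¹ * (l * t * c - (1 - l)) ^ 2 := by
    field_simp
    ring
  rw [key]
  positivity

theorem sum_range_eq_tsum_ite {k : ℕ} (g : ℕ → ℝ≥0∞) :
    ∑ i ∈ range k, g i = ∑' i, (if i < k then 1 else 0) * g i := by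
  rw [tsum_eq_sum (s := range k) fun i hi => by simp_all]
  exact sum_congr rfl fun i hi => by simp_all

theorem Measurable.sum_range_apply {Ω β : Type*} [MeasurableSpace Ω] [MeasurableSpace β]
    [AddCommMonoid β] [MeasurableAdd₂ β] {N : Ω → ℕ} (hN : Measurable N) {f : ℕ → Ω → β}
    (hf : ∀ i, Measurable (f i)) : Measurable fun ω => ∑ i ∈ range (N ω), f i ω := by
  have h : Measurable fun p : Ω × ℕ => ∑ i ∈ range p.2, f i p.1 :=
    measurable_from_prod_countable_left fun k => Finset.measurable_sum (range k) fun i _ => hf i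
  exact h.comp (measurable_id.prodMk hN)

theorem lintegral_sum_range_le_of_indepFun {Ω : Type*} [MeasurableSpace Ω] {μ : Measure Ω}
    {N : Ω → ℕ} (hN : Measurable N) {G : ℕ → Ω → ℝ≥0∞} (hG : ∀ i, Measurable (G i))
    (hindep : ∀ i, IndepFun N (G i) μ) {c : ℝ≥0∞} (hc : ∀ i, ∫⁻ ω, G i ω ∂μ ≤ c) :
    ∫⁻ ω, ∑ i ∈ range (N ω), G i ω ∂μ ≤ (∫⁻ ω, (N ω : ℝ≥0∞) ∂μ) * c := by
  let χ : ℕ → ℕ → ℝ≥0∞ := fun i k => if i < k then 1 else 0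
  have hχ : ∀ i, Measurable (χ i ∘ N) := fun i => (measurable_from_nat (f := χ i)).comp hN
  have hN_eq : ∀ ω, (N ω : ℝ≥0∞) = ∑' i, χ i (N ω) := fun ω => by
    simpa using sum_range_eq_tsum_ite (k := N ω) fun _ => 1
  calc ∫⁻ ω, ∑ i ∈ range (N ω), G i ω ∂μ
      = ∑' i, ∫⁻ ω, (χ i ∘ N * G i) ω ∂μ := by
        simp_rw [sum_range_eq_tsum_ite]
        exact lintegral_tsum fun i => ((hχ i).mul (hG i)).aemeasurable
    _ = ∑' i, (∫⁻ ω, χ i (N ω) ∂μ) * ∫⁻ ω, G i ω ∂μ := tsum_congr fun i =>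
        lintegral_mul_eq_lintegral_mul_lintegral_of_indepFun (hχ i) (hG i)
          ((hindep i).comp measurable_from_nat measurable_id)
    _ ≤ ∑' i, (∫⁻ ω, χ i (N ω) ∂μ) * c := ENNReal.tsum_le_tsum fun i => by gcongr; exact hc i
    _ = (∫⁻ ω, (N ω : ℝ≥0∞) ∂μ) * c := by
        rw [ENNReal.tsum_mul_right,
          ← lintegral_tsum (f := fun i ω => χ i (N ω)) fun i => (hχ i).aemeasurable]
        simp_rw [hN_eq]

theorem ProbabilityTheory.iIndepFun.indepFun_of_measurable_iSup_ne {Ω ι γ : Type*} {β : ι → Type*}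
    [MeasurableSpace Ω] [∀ i, MeasurableSpace (β i)] [MeasurableSpace γ] {μ : Measure Ω}
    {f : ∀ i, Ω → β i} (hindep : iIndepFun f μ) (hf : ∀ i, Measurable (f i)) (i : ι)
    {g : Ω → γ} (hg : Measurable[⨆ j ∈ {j | j ≠ i}, MeasurableSpace.comap (f j) inferInstance] g) :
    IndepFun (f i) g μ := by
  have h := indep_biSup_compl (fun j => (hf j).comap_le) hindep {i}
  rw [Set.compl_singleton_eq] at h
  simp only [Set.mem_singleton_iff, iSup_iSup_eq_left] at h
  exact indep_of_indep_of_le_right h hg.comap_le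

theorem measurable_gwCond_of_prefix {Ω : Type*} {mΩ : MeasurableSpace Ω} (m : ℝ)
    {ν : List ℕ → Ω → ℕ} {ξ : List ℕ → Ω → ℝ} (n : ℕ) {y : List ℕ}
    (hν : ∀ z, y <+: z → Measurable (ν z)) (hξ : ∀ z, y <+: z → Measurable (ξ z)) :
    Measurable (gwCond m ν ξ n y) := by
  induction n generalizing y with
  | zero => exact measurable_const
  | succ n ih =>
    have hchild : ∀ i z, y ++ [i] <+: z → y <+: z := fun i _ h => (List.prefix_append _ _).trans h
    cases n with
    | zero =>
      exact (Measurable.sum_range_apply (hν y List.prefix_rfl) fun i =>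
        (hξ _ (List.prefix_append _ _)).inv).const_mul _
    | succ n =>
      refine (Measurable.sum_range_apply (hν y List.prefix_rfl) fun i => ?_).const_mul _
      have hC := ih (fun z hz => hν z (hchild i z hz)) (fun z hz => hξ z (hchild i z hz))
      exact hC.div (measurable_const.add ((hξ _ (List.prefix_append _ _)).mul hC))

theorem gwCond_nonneg {Ω : Type*} {m : ℝ} (hm : 0 ≤ m) {ν : List ℕ → Ω → ℕ}
    {ξ : List ℕ → Ω → ℝ} {ω : Ω} (hξ : ∀ x, 0 ≤ ξ x ω) (n : ℕ) (y : List ℕ) :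
    0 ≤ gwCond m ν ξ n y ω := by
  induction n generalizing y with
  | zero => exact le_rfl
  | succ n ih =>
    cases n with
    | zero => exact mul_nonneg (inv_nonneg.2 hm) (sum_nonneg fun i _ => inv_nonneg.2 (hξ _))
    | succ n =>
      refine mul_nonneg (inv_nonneg.2 hm) (sum_nonneg fun i _ => ?_)
      have hC := ih (y ++ [i])
      exact div_nonneg hC (add_nonneg zero_le_one (mul_nonneg (hξ _) hC))

section GaltonWatson

variable {Ω : Type*} {ν : List ℕ → Ω → ℕ} {ξ : List ℕ → Ω → ℝ}

abbrev sigmaExceptOffspring (ν : List ℕ → Ω → ℕ) (ξ : List ℕ → Ω → ℝ) (x : List ℕ) :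
    MeasurableSpace Ω :=
  ⨆ j ∈ {j | j ≠ Sum.inl x}, MeasurableSpace.comap (pairFam ν ξ j) inferInstance

theorem measurable_pairFam_sigmaExceptOffspring {x : List ℕ} {j : List ℕ ⊕ List ℕ}
    (hj : j ≠ .inl x) : Measurable[sigmaExceptOffspring ν ξ x] (pairFam ν ξ j) :=
  Measurable.of_comap_le
    (le_biSup (fun j => MeasurableSpace.comap (pairFam ν ξ j) inferInstance) hj)

theorem measurable_weight_sigmaExceptOffspring (x z : List ℕ) :
    Measurable[sigmaExceptOffspring ν ξ x] (ξ z) :=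
  measurable_pairFam_sigmaExceptOffspring (j := .inr z) Sum.inr_ne_inl

theorem measurable_gwCond_child_sigmaExceptOffspring (m : ℝ) (x : List ℕ) (n i : ℕ) :
    Measurable[sigmaExceptOffspring ν ξ x] (gwCond m ν ξ n (x ++ [i])) := by
  refine measurable_gwCond_of_prefix m n
    (fun z hz => measurable_pairFam_sigmaExceptOffspring (j := .inl z) ?_)
    fun z _ => measurable_weight_sigmaExceptOffspring x z
  rintro ⟨⟩
  simpa using hz.length_le

variable [MeasurableSpace Ω] {P : Measure Ω}

theorem measurable_pairFam (hmν : ∀ x, Measurable (ν x)) (hmξ : ∀ x, Measurable (ξ x)) :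
    ∀ j, Measurable (pairFam ν ξ j)
  | .inl x => hmν x
  | .inr x => hmξ x

theorem measurable_gwCond (m : ℝ) (hmν : ∀ x, Measurable (ν x)) (hmξ : ∀ x, Measurable (ξ x))
    (n : ℕ) (y : List ℕ) : Measurable (gwCond m ν ξ n y) :=
  measurable_gwCond_of_prefix m n (fun z _ => hmν z) fun z _ => hmξ z

theorem sigmaExceptOffspring_le (hmν : ∀ x, Measurable (ν x)) (hmξ : ∀ x, Measurable (ξ x))
    (x : List ℕ) : sigmaExceptOffspring ν ξ x ≤ ‹MeasurableSpace Ω› :=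
  iSup₂_le fun j _ => (measurable_pairFam hmν hmξ j).comap_le

theorem lintegral_ofReal_inv_mul_sum_range_le {m : ℝ} (hm : 0 < m)
    (hmν : ∀ x, Measurable (ν x)) (hmξ : ∀ x, Measurable (ξ x))
    (hindep : iIndepFun (pairFam ν ξ) P) {x : List ℕ}
    (hmean : ∫⁻ ω, (ν x ω : ℝ≥0∞) ∂P = ENNReal.ofReal m)
    {D : ℕ → Ω → ℝ} (hD : ∀ i, ∀ᵐ ω ∂P, 0 ≤ D i ω)
    {G : ℕ → Ω → ℝ≥0∞} (hG : ∀ i, Measurable[sigmaExceptOffspring ν ξ x] (G i))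
    (hDG : ∀ i, ∀ᵐ ω ∂P, ENNReal.ofReal (D i ω) ≤ G i ω)
    {c : ℝ≥0∞} (hc : ∀ i, ∫⁻ ω, G i ω ∂P ≤ c) :
    ∫⁻ ω, ENNReal.ofReal (m⁻¹ * ∑ i ∈ range (ν x ω), D i ω) ∂P ≤ c := by
  have hG' : ∀ i, Measurable (G i) := fun i =>
    (hG i).mono (sigmaExceptOffspring_le hmν hmξ x) le_rfl
  have hpointwise : ∀ᵐ ω ∂P, ENNReal.ofReal (m⁻¹ * ∑ i ∈ range (ν x ω), D i ω)
      ≤ ENNReal.ofReal m⁻¹ * ∑ i ∈ range (ν x ω), G i ω := by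
    filter_upwards [ae_all_iff.2 hD, ae_all_iff.2 hDG] with ω hD hDG
    rw [ENNReal.ofReal_mul (inv_nonneg.2 hm.le), ENNReal.ofReal_sum_of_nonneg fun i _ => hD i]
    gcongr with i
    exact hDG i
  calc ∫⁻ ω, ENNReal.ofReal (m⁻¹ * ∑ i ∈ range (ν x ω), D i ω) ∂P
      ≤ ENNReal.ofReal m⁻¹ * ∫⁻ ω, ∑ i ∈ range (ν x ω), G i ω ∂P := by
        rw [← lintegral_const_mul _ (Measurable.sum_range_apply (hmν x) hG')]
        exact lintegral_mono_ae hpointwise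
    _ ≤ ENNReal.ofReal m⁻¹ * (ENNReal.ofReal m * c) := by
        rw [← hmean]
        gcongr
        exact lintegral_sum_range_le_of_indepFun (hmν x) hG' (fun i =>
          hindep.indepFun_of_measurable_iSup_ne (measurable_pairFam hmν hmξ) (.inl x) (hG i)) hc
    _ = c := by
        rw [← mul_assoc, ← ENNReal.ofReal_mul (inv_nonneg.2 hm.le), inv_mul_cancel₀ hm.ne',
          ENNReal.ofReal_one, one_mul]

theorem lintegral_ofReal_gwCond_le {m : ℝ} (hm : 0 < m)
    (hmν : ∀ x, Measurable (ν x)) (hmξ : ∀ x, Measurable (ξ x))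
    (hindep : iIndepFun (pairFam ν ξ) P) (hξ : ∀ᵐ ω ∂P, ∀ x, 0 < ξ x ω)
    (hmean : ∀ x, ∫⁻ ω, (ν x ω : ℝ≥0∞) ∂P = ENNReal.ofReal m)
    {A : ℝ} (hA0 : 0 ≤ A) (hA : ∀ x, ∫⁻ ω, ENNReal.ofReal (ξ x ω)⁻¹ ∂P = ENNReal.ofReal A) (k : ℕ)
    (x : List ℕ) :
    ∫⁻ ω, ENNReal.ofReal (gwCond m ν ξ (k + 1) x ω) ∂P ≤ ENNReal.ofReal (A / (k + 1)) := by
  induction k generalizing x with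
  | zero =>
    simp only [CharP.cast_eq_zero, zero_add, div_one]
    exact lintegral_ofReal_inv_mul_sum_range_le (D := fun i ω => (ξ (x ++ [i]) ω)⁻¹)
      hm hmν hmξ hindep (hmean x) (fun i => hξ.mono fun ω hω => inv_nonneg.2 (hω _).le)
      (fun i => (measurable_weight_sigmaExceptOffspring x _).inv.ennreal_ofReal)
      (fun i => ae_of_all _ fun ω => le_rfl) fun i => (hA _).le
  | succ k ih =>
    set N : ℝ := k + 1
    set l : ℝ := N / (N + 1)
    set C : ℕ → Ω → ℝ := fun i => gwCond m ν ξ (k + 1) (x ++ [i])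
    have hC : ∀ i, ∀ᵐ ω ∂P, 0 ≤ C i ω := fun i =>
      hξ.mono fun ω hω => gwCond_nonneg hm.le (fun z => (hω z).le) _ _
    refine lintegral_ofReal_inv_mul_sum_range_le (G := fun i ω =>
        ENNReal.ofReal (l ^ 2) * ENNReal.ofReal (C i ω)
          + ENNReal.ofReal ((1 - l) ^ 2) * ENNReal.ofReal (ξ (x ++ [i]) ω)⁻¹)
      hm hmν hmξ hindep (hmean x) (fun i => ?_) (fun i => ?_) (fun i => ?_) (fun i => ?_)
    · filter_upwards [hC i, hξ] with ω hCω hξω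
      exact div_nonneg hCω (add_nonneg zero_le_one (mul_nonneg (hξω _).le hCω))
    · exact ((measurable_gwCond_child_sigmaExceptOffspring m x _ i).ennreal_ofReal.const_mul _).add
        ((measurable_weight_sigmaExceptOffspring x _).inv.ennreal_ofReal.const_mul _)
    · filter_upwards [hC i, hξ] with ω hCω hξω
      rw [← ENNReal.ofReal_mul (sq_nonneg _), ← ENNReal.ofReal_mul (sq_nonneg _),
        ← ENNReal.ofReal_add (mul_nonneg (sq_nonneg _) hCω)
          (mul_nonneg (sq_nonneg _) (inv_nonneg.2 (hξω _).le))]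
      exact ENNReal.ofReal_le_ofReal (div_one_add_mul_le hCω (hξω _) l)
    · calc ∫⁻ ω, ENNReal.ofReal (l ^ 2) * ENNReal.ofReal (C i ω)
            + ENNReal.ofReal ((1 - l) ^ 2) * ENNReal.ofReal (ξ (x ++ [i]) ω)⁻¹ ∂P
          = ENNReal.ofReal (l ^ 2) * ∫⁻ ω, ENNReal.ofReal (C i ω) ∂P
            + ENNReal.ofReal ((1 - l) ^ 2) * ∫⁻ ω, ENNReal.ofReal (ξ (x ++ [i]) ω)⁻¹ ∂P := by
            rw [lintegral_add_left
                ((measurable_gwCond m hmν hmξ _ _).ennreal_ofReal.const_mul _),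
              lintegral_const_mul' _ _ ENNReal.ofReal_ne_top,
              lintegral_const_mul' _ _ ENNReal.ofReal_ne_top]
        _ ≤ ENNReal.ofReal (l ^ 2) * ENNReal.ofReal (A / N)
            + ENNReal.ofReal ((1 - l) ^ 2) * ENNReal.ofReal A := by
            gcongr
            · exact ih _
            · exact (hA _).le
        _ = ENNReal.ofReal (A / ((k + 1 : ℕ) + 1)) := by
            rw [← ENNReal.ofReal_mul (sq_nonneg _), ← ENNReal.ofReal_mul (sq_nonneg _),
              ← ENNReal.ofReal_add (by positivity) (by positivity)]
            congr 1
            simp only [l, N]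
            push_cast
            field_simp
            ring

end GaltonWatson

theorem expected_conductance_upper_bound_general
    {Ω : Type*} [MeasurableSpace Ω] (P : Measure Ω)
    -- the offspring variables `ν_x` and the edge weights `ξ_x`
    (ν : List ℕ → Ω → ℕ) (ξ : List ℕ → Ω → ℝ)
    (hmν : ∀ x, Measurable (ν x)) (hmξ : ∀ x, Measurable (ξ x))
    -- the two families are i.i.d. and globally independent
    (hindep : iIndepFun (pairFam ν ξ) P)
    (hidν : ∀ x, IdentDistrib (ν x) (ν root) P P)
    (hidξ : ∀ x, IdentDistrib (ξ x) (ξ root) P P)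
    -- `ν` takes values in the positive integers and `ξ` is strictly positive
    (hξpos : ∀ x, ∀ᵐ ω ∂P, 0 < ξ x ω)
    -- the mean offspring number `m = E[ν]` satisfies `1 < m`
    (hνint : Integrable (fun ω => (ν root ω : ℝ)) P)
    (m : ℝ) (hm : m = ∫ ω, (ν root ω : ℝ) ∂P) (hm1 : 1 < m)
    (hξinv : Integrable (fun ω => (ξ root ω)⁻¹) P)
    :
    ∀ n : ℕ, 1 ≤ n →
      ∫ ω, gwCond m ν ξ n root ω ∂P ≤ (∫ ω, (ξ root ω)⁻¹ ∂P) / n := by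
  intro n hn
  obtain ⟨k, rfl⟩ : ∃ k, n = k + 1 := ⟨n - 1, by omega⟩
  have hξ : ∀ᵐ ω ∂P, ∀ x, 0 < ξ x ω := ae_all_iff.2 hξpos
  have hinv0 : 0 ≤ᵐ[P] fun ω => (ξ root ω)⁻¹ := (hξpos root).mono fun ω h => inv_nonneg.2 h.le
  have hmean : ∀ x, ∫⁻ ω, (ν x ω : ℝ≥0∞) ∂P = ENNReal.ofReal m := fun x => by
    refine ((hidν x).comp (u := ((↑) : ℕ → ℝ≥0∞)) measurable_from_nat).lintegral_eq.trans ?_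
    rw [hm, ofReal_integral_eq_lintegral_ofReal hνint (ae_of_all _ fun ω => Nat.cast_nonneg _)]
    simp
  have hA : ∀ x, ∫⁻ ω, ENNReal.ofReal (ξ x ω)⁻¹ ∂P = ENNReal.ofReal (∫ ω, (ξ root ω)⁻¹ ∂P) :=
    fun x => by
      rw [ofReal_integral_eq_lintegral_ofReal hξinv hinv0]
      exact ((hidξ x).comp (u := fun t => ENNReal.ofReal t⁻¹)
        measurable_inv.ennreal_ofReal).lintegral_eq
  have hbound := lintegral_ofReal_gwCond_le (zero_lt_one.trans hm1) hmν hmξ hindep hξ hmean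
    (integral_nonneg_of_ae hinv0) hA k root
  rw [integral_eq_lintegral_of_nonneg_ae
    (hξ.mono fun ω hω => gwCond_nonneg (zero_lt_one.trans hm1).le (fun x => (hω x).le) _ _)
    (measurable_gwCond m hmν hmξ _ _).aestronglyMeasurable]
  push_cast
  exact ENNReal.toReal_le_of_le_ofReal (div_nonneg (integral_nonneg_of_ae hinv0) (by positivity))
    hbound

/-- Upper bound on the expected conductance: `E[C_n] ≤ E[ξ⁻¹]/n` for all `n ≥ 1`. -/
theorem expected_conductance_upper_bound
    {Ω : Type*} [MeasurableSpace Ω] (P : Measure Ω) [IsProbabilityMeasure P]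
    -- the offspring variables `ν_x` and the edge weights `ξ_x`
    (ν : List ℕ → Ω → ℕ) (ξ : List ℕ → Ω → ℝ)
    (hmν : ∀ x, Measurable (ν x)) (hmξ : ∀ x, Measurable (ξ x))
    -- the two families are i.i.d. and globally independent
    (hindep : iIndepFun (pairFam ν ξ) P)
    (hidν : ∀ x, IdentDistrib (ν x) (ν root) P P)
    (hidξ : ∀ x, IdentDistrib (ξ x) (ξ root) P P)
    -- `ν` takes values in the positive integers and `ξ` is strictly positive
    (hνpos : ∀ x, ∀ᵐ ω ∂P, 0 < ν x ω)
    (hξpos : ∀ x, ∀ᵐ ω ∂P, 0 < ξ x ω)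
    -- the mean offspring number `m = E[ν]` satisfies `1 < m`
    (hνint : Integrable (fun ω => (ν root ω : ℝ)) P)
    (m : ℝ) (hm : m = ∫ ω, (ν root ω : ℝ) ∂P) (hm1 : 1 < m)
    (hξinv : Integrable (fun ω => (ξ root ω)⁻¹) P)
    :
    ∀ n : ℕ, 1 ≤ n →
      ∫ ω, gwCond m ν ξ n root ω ∂P ≤ (∫ ω, (ξ root ω)⁻¹ ∂P) / n :=
  expected_conductance_upper_bound_general P ν ξ hmν hmξ hindep hidν hidξ hξpos hνint m hm hm1 hξinv
end
end

section
/- Necessity of the integrability of 1/W for linear expected resistance: if E[ξ^{-1}] < ∞, then liminf_{n→∞} E[R_n]/n ≥ E[W^{-1}]/E[ξ^{-1}] (where both sides may be infinite). In particular, E[W^{-1}] < ∞ is necessary for E[R_n] = O(n). -/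
open MeasureTheory ProbabilityTheory Filter Topology Asymptotics
open scoped ENNReal

noncomputable section

/-! Nash-Williams' inequality, with the successive generations of the tree as cutsets, gives
`R_n ≥ ∑_{k=1}^n m^k / S_k` where `S_k = ∑_{|y| = k} ξ_y⁻¹`. The weights are independent of the
tree, so conditioning on `T_k` and applying Jensen's inequality to `x ↦ x⁻¹` yields
`E[m^k / S_k] ≥ E[m^k / #T_k] / E[ξ⁻¹] = E[W_k⁻¹] / E[ξ⁻¹]`. Fatou's lemma gives
`E[W⁻¹] ≤ liminf E[W_k⁻¹]`, and a Cesàro average turns this into the lower bound on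
`E[R_n] / n`. -/

section Parallel

variable {ι κ : Type*} {s : Finset ι}

def parallel (s : Finset ι) (r : ι → ℝ) : ℝ := (∑ i ∈ s, (r i)⁻¹)⁻¹

lemma parallel_le_sum_sq_mul {r p : ι → ℝ} (hr : ∀ i ∈ s, 0 < r i) (hp : ∑ i ∈ s, p i = 1) :
    parallel s r ≤ ∑ i ∈ s, p i ^ 2 * r i := by
  have h := Finset.sq_sum_div_le_sum_sq_div s p (g := fun i => (r i)⁻¹)
    fun i hi => inv_pos.2 (hr i hi)
  simpa only [parallel, hp, one_pow, one_div, div_inv_eq_mul] using h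

lemma parallel_eq_sum_sq_mul {r : ι → ℝ} (hr : ∀ i ∈ s, r i ≠ 0) :
    parallel s r = ∑ i ∈ s, ((r i)⁻¹ * parallel s r) ^ 2 * r i := by
  have hterm : ∀ i ∈ s, ((r i)⁻¹ * parallel s r) ^ 2 * r i = parallel s r ^ 2 * (r i)⁻¹ :=
    fun i hi => by field_simp [hr i hi]
  rw [Finset.sum_congr rfl hterm, ← Finset.mul_sum, parallel]
  rcases eq_or_ne (∑ i ∈ s, (r i)⁻¹) 0 with h | h
  · simp [h]
  · field_simp

lemma parallel_mono {r r' : ι → ℝ} (hr : ∀ i ∈ s, 0 < r i) (hrr' : ∀ i ∈ s, r i ≤ r' i) :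
    parallel s r ≤ parallel s r' := by
  rcases s.eq_empty_or_nonempty with rfl | hs
  · simp [parallel]
  refine inv_anti₀ (Finset.sum_pos (fun i hi => inv_pos.2 ?_) hs)
    (Finset.sum_le_sum fun i hi => inv_anti₀ (hr i hi) (hrr' i hi))
  exact (hr i hi).trans_le (hrr' i hi)

/-- By Thomson's principle `parallel s r = min_{∑ p = 1} ∑ p_i² r_i`, and the minimiser for the
total resistances is admissible for each summand. -/
lemma sum_parallel_le_parallel_sum {K : Finset κ} {c : ι → κ → ℝ}
    (hc : ∀ i ∈ s, ∀ k ∈ K, 0 < c i k) :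
    ∑ k ∈ K, parallel s (c · k) ≤ parallel s fun i => ∑ k ∈ K, c i k := by
  rcases s.eq_empty_or_nonempty with rfl | hs
  · simp [parallel]
  rcases K.eq_empty_or_nonempty with rfl | hK
  · simp [parallel]
  set r : ι → ℝ := fun i => ∑ k ∈ K, c i k
  have hr : ∀ i ∈ s, 0 < r i := fun i hi => Finset.sum_pos (hc i hi) hK
  set p : ι → ℝ := fun i => (r i)⁻¹ * parallel s r
  have hp : ∑ i ∈ s, p i = 1 := by
    rw [← Finset.sum_mul, parallel, mul_inv_cancel₀]
    exact (Finset.sum_pos (fun i hi => inv_pos.2 (hr i hi)) hs).ne'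
  calc ∑ k ∈ K, parallel s (c · k)
      ≤ ∑ k ∈ K, ∑ i ∈ s, p i ^ 2 * c i k :=
        Finset.sum_le_sum fun k hk => parallel_le_sum_sq_mul (fun i hi => hc i hi k hk) hp
    _ = ∑ i ∈ s, p i ^ 2 * r i := by
        rw [Finset.sum_comm]; simp only [r, Finset.mul_sum]
    _ = parallel s r := (parallel_eq_sum_sq_mul fun i hi => (hr i hi).ne').symm

end Parallel

section Tree

variable {Ω : Type*} (ν : List ℕ → Ω → ℕ) (ξ : List ℕ → Ω → ℝ)

def descendants : ℕ → List ℕ → Ω → Finset (List ℕ)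
  | 0, x, _ => {x}
  | k + 1, x, ω => (Finset.range (ν x ω)).biUnion fun i => descendants k (x ++ [i]) ω

variable {ν}

lemma prefix_of_mem_descendants {k : ℕ} {x y : List ℕ} {ω : Ω}
    (hy : y ∈ descendants ν k x ω) : x <+: y := by
  induction k generalizing x with
  | zero => rw [descendants, Finset.mem_singleton] at hy; exact hy ▸ List.prefix_refl x
  | succ k ih =>
    obtain ⟨i, -, hy⟩ := Finset.mem_biUnion.1 hy
    exact (List.prefix_append x [i]).trans (ih hy)

lemma pairwiseDisjoint_descendants (k n : ℕ) (x : List ℕ) (ω : Ω) :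
    (Finset.range n : Set ℕ).PairwiseDisjoint fun i => descendants ν k (x ++ [i]) ω := by
  intro i _ j _ hij
  refine Finset.disjoint_left.2 fun y hi hj => hij ?_
  have hprefix := List.prefix_of_prefix_length_le (prefix_of_mem_descendants hi)
    (prefix_of_mem_descendants hj) (by simp)
  simpa using hprefix.eq_of_length (by simp)

lemma card_descendants (k : ℕ) (x : List ℕ) (ω : Ω) :
    (descendants ν k x ω).card = tcount ν k x ω := by
  induction k generalizing x with
  | zero => rfl
  | succ k ih =>
    rw [descendants, Finset.card_biUnion (pairwiseDisjoint_descendants k _ x ω), tcount]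
    exact Finset.sum_congr rfl fun i _ => ih _

lemma descendants_nonempty {ω : Ω} (hν : ∀ y, 0 < ν y ω) (k : ℕ) (x : List ℕ) :
    (descendants ν k x ω).Nonempty := by
  induction k generalizing x with
  | zero => exact Finset.singleton_nonempty x
  | succ k ih =>
    obtain ⟨y, hy⟩ := ih (x ++ [0])
    exact ⟨y, Finset.mem_biUnion.2 ⟨0, Finset.mem_range.2 (hν x), hy⟩⟩

lemma measurable_descendants {mΩ : MeasurableSpace Ω} (hν : ∀ y, Measurable (ν y)) (k : ℕ)
    (x : List ℕ) : Measurable (descendants ν k x) := by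
  induction k generalizing x with
  | zero => exact measurable_const
  | succ k ih =>
    have hunion : ∀ n, Measurable fun ω =>
        (Finset.range n).biUnion fun i => descendants ν k (x ++ [i]) ω := by
      intro n
      induction n with
      | zero => simp
      | succ n ihn =>
        simp only [Finset.range_add_one, Finset.biUnion_insert]
        exact (Measurable.of_discrete (f := fun p : Finset (List ℕ) × Finset (List ℕ) =>
          p.1 ∪ p.2)).comp ((ih _).prodMk ihn)
    exact (measurable_from_prod_countable_right (f := fun p : ℕ × Ω =>
      (Finset.range p.1).biUnion fun i => descendants ν k (x ++ [i]) p.2) hunion).comp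
        ((hν x).prodMk measurable_id)

variable (ν)

/-- `m^{-(|x| + k)} * levelInvSum ν ξ k x ω` is the total conductance of the edges entering the
`k`-th generation below `x`. -/
def levelInvSum (k : ℕ) (x : List ℕ) (ω : Ω) : ℝ := ∑ y ∈ descendants ν k x ω, (ξ y ω)⁻¹

variable {ν ξ}

lemma levelInvSum_zero (x : List ℕ) (ω : Ω) : levelInvSum ν ξ 0 x ω = (ξ x ω)⁻¹ := by
  simp [levelInvSum, descendants]

lemma levelInvSum_succ (k : ℕ) (x : List ℕ) (ω : Ω) :
    levelInvSum ν ξ (k + 1) x ω = ∑ i ∈ Finset.range (ν x ω), levelInvSum ν ξ k (x ++ [i]) ω := by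
  rw [levelInvSum, descendants, Finset.sum_biUnion (pairwiseDisjoint_descendants k _ x ω)]
  rfl

lemma levelInvSum_pos {ω : Ω} (hν : ∀ y, 0 < ν y ω) (hξ : ∀ y, 0 < ξ y ω) (k : ℕ)
    (x : List ℕ) : 0 < levelInvSum ν ξ k x ω :=
  Finset.sum_pos (fun y _ => inv_pos.2 (hξ y)) (descendants_nonempty hν k x)

lemma parallel_div_levelInvSum (c : ℝ) (k : ℕ) (x : List ℕ) (ω : Ω) :
    parallel (Finset.range (ν x ω)) (fun i => c / levelInvSum ν ξ k (x ++ [i]) ω) =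
      c / levelInvSum ν ξ (k + 1) x ω := by
  simp only [parallel, inv_div, ← Finset.sum_div, ← levelInvSum_succ]

end Tree

section Conductance

variable {Ω : Type*} {m : ℝ} {ν : List ℕ → Ω → ℕ} {ξ : List ℕ → Ω → ℝ} {ω : Ω}

lemma gwCond_succ_pos (hm : 0 < m) (hν : ∀ y, 0 < ν y ω) (hξ : ∀ y, 0 < ξ y ω) (n : ℕ)
    (x : List ℕ) : 0 < gwCond m ν ξ (n + 1) x ω := by
  have hs : (Finset.range (ν x ω)).Nonempty := Finset.nonempty_range_iff.2 (hν x).ne'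
  induction n generalizing x with
  | zero =>
    rw [gwCond]
    exact mul_pos (inv_pos.2 hm) (Finset.sum_pos (fun i _ => inv_pos.2 (hξ _)) hs)
  | succ n ih =>
    rw [gwCond]
    refine mul_pos (inv_pos.2 hm) (Finset.sum_pos (fun i _ => ?_) hs)
    have := ih (x ++ [i]) (Finset.nonempty_range_iff.2 (hν _).ne')
    have := hξ (x ++ [i])
    positivity

/-- For `n = 0` this relies on `(gwCond m ν ξ 0 x ω)⁻¹ = 0⁻¹ = 0`, the resistance `R_0 = 0`. -/
lemma inv_gwCond_succ (hm : 0 < m) (hν : ∀ y, 0 < ν y ω) (hξ : ∀ y, 0 < ξ y ω) (n : ℕ)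
    (x : List ℕ) :
    (gwCond m ν ξ (n + 1) x ω)⁻¹ = m * parallel (Finset.range (ν x ω))
      fun i => ξ (x ++ [i]) ω + (gwCond m ν ξ n (x ++ [i]) ω)⁻¹ := by
  cases n with
  | zero => simp [gwCond, parallel, mul_comm]
  | succ n =>
    rw [gwCond, parallel, mul_inv, inv_inv]
    congr 2
    refine Finset.sum_congr rfl fun i _ => ?_
    have hC := gwCond_succ_pos hm hν hξ n (x ++ [i])
    have := hξ (x ++ [i])
    field_simp
    ring

lemma sum_pow_div_levelInvSum_le_inv_gwCond (hm : 0 < m) (hν : ∀ y, 0 < ν y ω)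
    (hξ : ∀ y, 0 < ξ y ω) (n : ℕ) (x : List ℕ) :
    ∑ k ∈ Finset.range n, m ^ (k + 1) / levelInvSum ν ξ (k + 1) x ω ≤
      (gwCond m ν ξ n x ω)⁻¹ := by
  induction n generalizing x with
  | zero => simp [gwCond]
  | succ n ih =>
    set s := Finset.range (ν x ω)
    have hterm : ∀ i k, 0 < m ^ k / levelInvSum ν ξ k (x ++ [i]) ω :=
      fun i k => div_pos (pow_pos hm k) (levelInvSum_pos hν hξ k _)
    rw [inv_gwCond_succ hm hν hξ]
    calc ∑ k ∈ Finset.range (n + 1), m ^ (k + 1) / levelInvSum ν ξ (k + 1) x ω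
        = m * ∑ k ∈ Finset.range (n + 1),
            parallel s fun i => m ^ k / levelInvSum ν ξ k (x ++ [i]) ω := by
          simp only [parallel_div_levelInvSum, Finset.mul_sum, pow_succ, mul_div_assoc, s]
          ring_nf
      _ ≤ m * parallel s fun i => ∑ k ∈ Finset.range (n + 1),
            m ^ k / levelInvSum ν ξ k (x ++ [i]) ω := by
          gcongr
          exact sum_parallel_le_parallel_sum fun i _ k _ => hterm i k
      _ ≤ m * parallel s fun i => ξ (x ++ [i]) ω + (gwCond m ν ξ n (x ++ [i]) ω)⁻¹ := by
          gcongr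
          refine parallel_mono (fun i _ => Finset.sum_pos (fun k _ => hterm i k) (by simp))
            fun i _ => ?_
          rw [Finset.sum_range_succ', levelInvSum_zero, pow_zero, one_div, inv_inv, add_comm]
          exact add_le_add_right (ih _) _

end Conductance

section Probability

variable {Ω : Type*} {G H mΩ : MeasurableSpace Ω} {P : Measure Ω}

lemma ENNReal.two_mul_inv_le_inv_add_mul_inv_sq {x c : ℝ≥0∞} (hc0 : c ≠ 0) (hc : c ≠ ∞) :
    2 * c⁻¹ ≤ x⁻¹ + x * c⁻¹ ^ 2 := by
  rcases eq_or_ne x 0 with rfl | hx0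
  · simp
  rcases eq_or_ne x ∞ with rfl | hx
  · simp [hc]
  lift x to NNReal using hx
  lift c to NNReal using hc
  have hx : x ≠ 0 := by simpa using hx0
  have hc : c ≠ 0 := by simpa using hc0
  rw [← ENNReal.coe_inv hx, ← ENNReal.coe_inv hc]
  norm_cast
  rw [← NNReal.coe_le_coe]
  push_cast
  have hx' : (0 : ℝ) < x := by positivity
  have hsq : (x : ℝ)⁻¹ + x * (c : ℝ)⁻¹ ^ 2 - 2 * (c : ℝ)⁻¹ =
      (x : ℝ)⁻¹ * (1 - x * (c : ℝ)⁻¹) ^ 2 := by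
    field_simp
    ring
  nlinarith [mul_nonneg (inv_nonneg.2 hx'.le) (sq_nonneg (1 - (x : ℝ) * (c : ℝ)⁻¹))]

lemma inv_lintegral_le_lintegral_inv [IsProbabilityMeasure P] {h : Ω → ℝ≥0∞}
    (hh : AEMeasurable h P) : (∫⁻ ω, h ω ∂P)⁻¹ ≤ ∫⁻ ω, (h ω)⁻¹ ∂P := by
  set c := ∫⁻ ω, h ω ∂P
  rcases eq_or_ne c 0 with hc0 | hc0
  · have hinv : (fun ω => (h ω)⁻¹) =ᵐ[P] fun _ => ∞ :=
      ((lintegral_eq_zero_iff' hh).1 hc0).mono fun ω hω => by simp [hω]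
    simp [lintegral_congr_ae hinv]
  rcases eq_or_ne c ∞ with hc | hc
  · simp [hc]
  refine ENNReal.le_of_add_le_add_right (ENNReal.inv_ne_top.2 hc0) ?_
  -- integrate the tangent line of the convex function `x ↦ x⁻¹` at `c`
  calc c⁻¹ + c⁻¹ = ∫⁻ _, 2 * c⁻¹ ∂P := by simp [two_mul]
    _ ≤ ∫⁻ ω, ((h ω)⁻¹ + h ω * c⁻¹ ^ 2) ∂P :=
        lintegral_mono fun ω => ENNReal.two_mul_inv_le_inv_add_mul_inv_sq hc0 hc
    _ = (∫⁻ ω, (h ω)⁻¹ ∂P) + c⁻¹ := by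
        rw [lintegral_add_left' (f := fun ω => (h ω)⁻¹) hh.inv, lintegral_mul_const'' _ hh, sq,
          ← mul_assoc, ENNReal.mul_inv_cancel hc0 hc, one_mul]

lemma lintegral_eq_tsum_setLIntegral_fiber {α : Type*} [MeasurableSpace α] [Countable α]
    [MeasurableSingletonClass α] {V : Ω → α} (hV : Measurable V) (f : Ω → ℝ≥0∞) :
    ∫⁻ ω, f ω ∂P = ∑' a, ∫⁻ ω in V ⁻¹' {a}, f ω ∂P := by
  rw [← lintegral_iUnion (fun a => hV (measurableSet_singleton a)) (pairwise_disjoint_fiber V),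
    ← Set.preimage_iUnion, Set.iUnion_singleton_eq_range, Set.range_id', Set.preimage_univ,
    Measure.restrict_univ]

/-- Conditionally on the independent random set `V`, Jensen's inequality bounds the mean of
`(∑_{y ∈ V} g y)⁻¹` from below by the inverse of its conditional mean, at most `#V * D`. -/
lemma lintegral_inv_card_mul_inv_le {ι : Type*} [Countable ι] [IsProbabilityMeasure P]
    (hG : G ≤ mΩ) (hH : H ≤ mΩ) (hGH : Indep G H P)
    {V : Ω → Finset ι} (hV : Measurable[G] V) {g : ι → Ω → ℝ≥0∞} (hg : ∀ y, Measurable[H] (g y))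
    {D : ℝ≥0∞} (hD : ∀ y, ∫⁻ ω, g y ω ∂P ≤ D) :
    (∫⁻ ω, ((V ω).card : ℝ≥0∞)⁻¹ ∂P) * D⁻¹ ≤ ∫⁻ ω, (∑ y ∈ V ω, g y ω)⁻¹ ∂P := by
  have hVm : Measurable[mΩ] V := hV.mono hG le_rfl
  rw [lintegral_eq_tsum_setLIntegral_fiber hVm, lintegral_eq_tsum_setLIntegral_fiber hVm,
    ← ENNReal.tsum_mul_right]
  refine ENNReal.tsum_le_tsum fun t => ?_
  have hfiber : MeasurableSet[G] (V ⁻¹' {t}) := hV (measurableSet_singleton t)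
  have hsum : Measurable[H] fun ω => ∑ y ∈ t, g y ω := Finset.measurable_sum t fun y _ => hg y
  have hmean : ∫⁻ ω, ∑ y ∈ t, g y ω ∂P ≤ t.card * D := by
    rw [lintegral_finsetSum' t fun y _ => ((hg y).mono hH le_rfl).aemeasurable, ← nsmul_eq_mul]
    exact Finset.sum_le_card_nsmul t _ D fun y _ => hD y
  have hinv : ((t.card : ℝ≥0∞))⁻¹ * D⁻¹ ≤ (t.card * D)⁻¹ := by
    rcases eq_or_ne D ∞ with rfl | hDtop
    · simp
    rw [ENNReal.mul_inv (Or.inr hDtop) (Or.inl (ENNReal.natCast_ne_top _))]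
  calc (∫⁻ ω in V ⁻¹' {t}, ((V ω).card : ℝ≥0∞)⁻¹ ∂P) * D⁻¹
      = P (V ⁻¹' {t}) * ((t.card : ℝ≥0∞)⁻¹ * D⁻¹) := by
        rw [setLIntegral_congr_fun (hVm (measurableSet_singleton t))
          (fun ω (hω : V ω = t) => by rw [hω]), setLIntegral_const, mul_comm _ (P _), mul_assoc]
    _ ≤ P (V ⁻¹' {t}) * ∫⁻ ω, (∑ y ∈ t, g y ω)⁻¹ ∂P := by
        gcongr
        exact hinv.trans ((ENNReal.inv_le_inv.2 hmean).trans
          (inv_lintegral_le_lintegral_inv (hsum.mono hH le_rfl).aemeasurable))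
    _ = ∫⁻ ω, (V ⁻¹' {t}).indicator 1 ω * (∑ y ∈ t, g y ω)⁻¹ ∂P := by
        have hind : Measurable[G] ((V ⁻¹' {t}).indicator (1 : Ω → ℝ≥0∞)) :=
          Measurable.indicator (m := G) measurable_const hfiber
        have hsuminv : Measurable[H] fun ω => (∑ y ∈ t, g y ω)⁻¹ := hsum.inv
        rw [lintegral_mul_eq_lintegral_mul_lintegral_of_independent_measurableSpace hG hH hGH
          hind hsuminv, lintegral_indicator_one (hG _ hfiber)]
    _ = ∫⁻ ω in V ⁻¹' {t}, (∑ y ∈ V ω, g y ω)⁻¹ ∂P := by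
        rw [← lintegral_indicator (hVm (measurableSet_singleton t))]
        refine lintegral_congr fun ω => ?_
        by_cases hω : V ω = t <;> simp [Set.indicator, hω]

end Probability

section Limits

variable {Ω : Type*} {mΩ : MeasurableSpace Ω} {P : Measure Ω}

lemma lintegral_ofReal_inv_le_liminf {F : ℕ → Ω → ℝ} {W : Ω → ℝ}
    (hF : ∀ n, AEMeasurable (F n) P) (hlim : ∀ᵐ ω ∂P, Tendsto (F · ω) atTop (𝓝 (W ω))) :
    ∫⁻ ω, ENNReal.ofReal (W ω)⁻¹ ∂P ≤
      atTop.liminf fun n => ∫⁻ ω, ENNReal.ofReal (F n ω)⁻¹ ∂P := by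
  refine le_trans (lintegral_mono_ae (hlim.mono fun ω hω => ?_))
    (lintegral_liminf_le' fun n => (hF n).inv.ennreal_ofReal)
  rcases le_or_gt (W ω) 0 with hW | hW
  · simp [ENNReal.ofReal_eq_zero.2 (inv_nonpos.2 hW)]
  exact ((ENNReal.continuous_ofReal.tendsto _).comp (hω.inv₀ hW.ne')).liminf_eq.ge

lemma ENNReal.liminf_mul_const_le (u : ℕ → ℝ≥0∞) (c : ℝ≥0∞) :
    atTop.liminf u * c ≤ atTop.liminf fun n => u n * c := by
  simp only [liminf_eq_iSup_iInf_of_nat, ENNReal.iSup_mul]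
  exact iSup_mono fun n => le_iInf₂ fun i hi => by gcongr; exact iInf₂_le i hi

lemma ENNReal.tendsto_natCast_sub_div_atTop (K : ℕ) :
    Tendsto (fun n : ℕ => ((n - K : ℕ) : ℝ≥0∞) / n) atTop (𝓝 1) := by
  have hreal : Tendsto (fun n : ℕ => 1 - (K : ℝ) / n) atTop (𝓝 1) := by
    simpa using tendsto_const_nhds.sub (tendsto_const_div_atTop_nhds_zero_nat (K : ℝ))
  refine (ENNReal.ofReal_one ▸ ENNReal.tendsto_ofReal hreal).congr' ?_
  filter_upwards [eventually_ge_atTop (K + 1)] with n hn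
  have hn0 : (0 : ℝ) < n := Nat.cast_pos.2 (by omega)
  rw [← ENNReal.ofReal_natCast, ← ENNReal.ofReal_natCast n, ← ENNReal.ofReal_div_of_pos hn0,
    Nat.cast_sub (by omega), sub_div, div_self hn0.ne']

lemma ENNReal.liminf_le_liminf_cesaro (u : ℕ → ℝ≥0∞) :
    atTop.liminf u ≤ atTop.liminf fun n => (∑ k ∈ Finset.range n, u k) / n := by
  rw [le_liminf_iff]
  intro b hb
  obtain ⟨b', hbb', hb'⟩ := exists_between hb
  obtain ⟨K, hK⟩ := eventually_atTop.1 (eventually_lt_of_lt_liminf hb')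
  have hsum (n : ℕ) : ((n - K : ℕ) : ℝ≥0∞) * b' ≤ ∑ k ∈ Finset.range n, u k :=
    calc ((n - K : ℕ) : ℝ≥0∞) * b' = ∑ _k ∈ Finset.Ico K n, b' := by simp
      _ ≤ ∑ k ∈ Finset.Ico K n, u k :=
          Finset.sum_le_sum fun k hk => (hK k (Finset.mem_Ico.1 hk).1).le
      _ ≤ ∑ k ∈ Finset.range n, u k :=
          Finset.sum_le_sum_of_subset fun k hk => Finset.mem_range.2 (Finset.mem_Ico.1 hk).2
  have hlim : Tendsto (fun n : ℕ => ((n - K : ℕ) : ℝ≥0∞) / n * b') atTop (𝓝 b') := by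
    simpa using ENNReal.Tendsto.mul_const (tendsto_natCast_sub_div_atTop K) (Or.inl one_ne_zero)
  filter_upwards [hlim.eventually (eventually_gt_nhds hbb')] with n hn
  calc b < ((n - K : ℕ) : ℝ≥0∞) / n * b' := hn
    _ = ((n - K : ℕ) : ℝ≥0∞) * b' / n := by rw [div_eq_mul_inv, div_eq_mul_inv, mul_right_comm]
    _ ≤ (∑ k ∈ Finset.range n, u k) / n := by gcongr; exact hsum n

end Limits

section GaltonWatson

variable {Ω : Type*} {mΩ : MeasurableSpace Ω} {P : Measure Ω} {ν : List ℕ → Ω → ℕ}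
  {ξ : List ℕ → Ω → ℝ}

lemma indep_iSup_comap_of_iIndepFun_pairFam (hmν : ∀ x, Measurable (ν x))
    (hmξ : ∀ x, Measurable (ξ x)) (hindep : iIndepFun (pairFam ν ξ) P) :
    Indep (⨆ x, MeasurableSpace.comap (ν x) inferInstance)
      (⨆ x, MeasurableSpace.comap (ξ x) inferInstance) P := by
  have hmeas : ∀ i, Measurable (pairFam ν ξ i)
    | .inl x => hmν x
    | .inr x => hmξ x
  have h := indep_iSup_of_disjoint (fun i => (hmeas i).comap_le) hindep.iIndep
    Set.isCompl_range_inl_range_inr.disjoint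
  rwa [iSup_range, iSup_range] at h

lemma measurable_tcount (hmν : ∀ y, Measurable (ν y)) (k : ℕ) (x : List ℕ) :
    Measurable fun ω => (tcount ν k x ω : ℝ) := by
  simp_rw [← card_descendants]
  exact (Measurable.of_discrete (f := fun t : Finset (List ℕ) => (t.card : ℝ))).comp
    (measurable_descendants hmν k x)

lemma measurable_levelInvSum (hmν : ∀ y, Measurable (ν y)) (hmξ : ∀ y, Measurable (ξ y))
    (k : ℕ) (x : List ℕ) : Measurable (levelInvSum ν ξ k x) :=
  (measurable_from_prod_countable_right (f := fun p : Finset (List ℕ) × Ω =>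
    ∑ y ∈ p.1, (ξ y p.2)⁻¹) fun t => Finset.measurable_sum t fun y _ => (hmξ y).inv).comp
      ((measurable_descendants hmν k x).prodMk measurable_id)

lemma lintegral_div_tcount_mul_inv_le [IsProbabilityMeasure P] (hmν : ∀ y, Measurable (ν y))
    (hmξ : ∀ y, Measurable (ξ y)) (hindep : iIndepFun (pairFam ν ξ) P)
    (hν : ∀ᵐ ω ∂P, ∀ y, 0 < ν y ω) (hξ : ∀ᵐ ω ∂P, ∀ y, 0 < ξ y ω) {D : ℝ≥0∞}
    (hD : ∀ y, ∫⁻ ω, ENNReal.ofReal (ξ y ω)⁻¹ ∂P ≤ D) (c : ℝ) (k : ℕ) (x : List ℕ) :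
    (∫⁻ ω, ENNReal.ofReal (c / tcount ν k x ω) ∂P) * D⁻¹ ≤
      ∫⁻ ω, ENNReal.ofReal (c / levelInvSum ν ξ k x ω) ∂P := by
  have hcard : (fun ω => ENNReal.ofReal (c / tcount ν k x ω)) =ᵐ[P]
      fun ω => ENNReal.ofReal c * ((descendants ν k x ω).card : ℝ≥0∞)⁻¹ := by
    filter_upwards [hν] with ω hνω
    have hpos : (0 : ℝ) < tcount ν k x ω := by
      rw [← card_descendants]; exact_mod_cast (descendants_nonempty hνω k x).card_pos
    rw [ENNReal.ofReal_div_of_pos hpos, ENNReal.ofReal_natCast, ← card_descendants,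
      div_eq_mul_inv]
  have hsum : (fun ω => ENNReal.ofReal (c / levelInvSum ν ξ k x ω)) =ᵐ[P]
      fun ω => ENNReal.ofReal c *
        (∑ y ∈ descendants ν k x ω, ENNReal.ofReal (ξ y ω)⁻¹)⁻¹ := by
    filter_upwards [hν, hξ] with ω hνω hξω
    rw [ENNReal.ofReal_div_of_pos (levelInvSum_pos hνω hξω k x), div_eq_mul_inv, levelInvSum,
      ENNReal.ofReal_sum_of_nonneg fun y _ => (inv_pos.2 (hξω y)).le]
  have key := lintegral_inv_card_mul_inv_le (iSup_le fun y => (hmν y).comap_le)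
    (iSup_le fun y => (hmξ y).comap_le) (indep_iSup_comap_of_iIndepFun_pairFam hmν hmξ hindep)
    (measurable_descendants (fun y => Measurable.of_comap_le
      (le_iSup (fun y => MeasurableSpace.comap (ν y) inferInstance) y)) k x)
    (fun y => (Measurable.of_comap_le
      (le_iSup (fun y => MeasurableSpace.comap (ξ y) inferInstance) y)).inv.ennreal_ofReal) hD
  rw [lintegral_congr_ae hcard, lintegral_congr_ae hsum,
    lintegral_const_mul' _ _ ENNReal.ofReal_ne_top, lintegral_const_mul' _ _ ENNReal.ofReal_ne_top,
    mul_assoc]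
  exact mul_le_mul_right key _

lemma sum_lintegral_pow_div_levelInvSum_le {m : ℝ} (hm : 0 < m) (hmν : ∀ y, Measurable (ν y))
    (hmξ : ∀ y, Measurable (ξ y)) (hν : ∀ᵐ ω ∂P, ∀ y, 0 < ν y ω)
    (hξ : ∀ᵐ ω ∂P, ∀ y, 0 < ξ y ω) (n : ℕ) (x : List ℕ) :
    ∑ k ∈ Finset.range n, ∫⁻ ω, ENNReal.ofReal (m ^ (k + 1) / levelInvSum ν ξ (k + 1) x ω) ∂P ≤
      ∫⁻ ω, ENNReal.ofReal (gwCond m ν ξ n x ω)⁻¹ ∂P := by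
  have hmeas (k : ℕ) :
      Measurable fun ω => ENNReal.ofReal (m ^ (k + 1) / levelInvSum ν ξ (k + 1) x ω) :=
    (measurable_const.div (measurable_levelInvSum hmν hmξ _ x)).ennreal_ofReal
  rw [← lintegral_finsetSum' _ fun k _ => (hmeas k).aemeasurable]
  refine lintegral_mono_ae ?_
  filter_upwards [hν, hξ] with ω hνω hξω
  rw [← ENNReal.ofReal_sum_of_nonneg fun k _ =>
    (div_pos (pow_pos hm _) (levelInvSum_pos hνω hξω _ x)).le]
  exact ENNReal.ofReal_le_ofReal (sum_pow_div_levelInvSum_le_inv_gwCond hm hνω hξω n x)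

lemma sum_lintegral_pow_div_tcount_mul_inv_le [IsProbabilityMeasure P] {m : ℝ} (hm : 0 < m)
    (hmν : ∀ y, Measurable (ν y)) (hmξ : ∀ y, Measurable (ξ y))
    (hindep : iIndepFun (pairFam ν ξ) P) (hν : ∀ᵐ ω ∂P, ∀ y, 0 < ν y ω)
    (hξ : ∀ᵐ ω ∂P, ∀ y, 0 < ξ y ω) {D : ℝ≥0∞} (hD : ∀ y, ∫⁻ ω, ENNReal.ofReal (ξ y ω)⁻¹ ∂P ≤ D)
    (n : ℕ) (x : List ℕ) :
    (∑ k ∈ Finset.range n, ∫⁻ ω, ENNReal.ofReal (m ^ (k + 1) / tcount ν (k + 1) x ω) ∂P) * D⁻¹ ≤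
      ∫⁻ ω, ENNReal.ofReal (gwCond m ν ξ n x ω)⁻¹ ∂P := by
  rw [Finset.sum_mul]
  exact (Finset.sum_le_sum fun k _ =>
    lintegral_div_tcount_mul_inv_le hmν hmξ hindep hν hξ hD _ _ x).trans
      (sum_lintegral_pow_div_levelInvSum_le hm hmν hmξ hν hξ n x)

lemma lintegral_ofReal_inv_le_liminf_pow_div_tcount {m : ℝ} (hmν : ∀ y, Measurable (ν y))
    {x : List ℕ} {W : Ω → ℝ}
    (hW : ∀ᵐ ω ∂P, Tendsto (fun n => (m ^ n)⁻¹ * (tcount ν n x ω : ℝ)) atTop (𝓝 (W ω))) :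
    ∫⁻ ω, ENNReal.ofReal (W ω)⁻¹ ∂P ≤
      atTop.liminf fun k => ∫⁻ ω, ENNReal.ofReal (m ^ (k + 1) / tcount ν (k + 1) x ω) ∂P := by
  refine (lintegral_ofReal_inv_le_liminf (fun k => ?_)
    (hW.mono fun ω h => h.comp (tendsto_add_atTop_nat 1))).trans_eq ?_
  · exact ((measurable_tcount hmν _ x).const_mul _).aemeasurable
  · simp only [Function.comp_apply, mul_inv, inv_inv, div_eq_mul_inv]

end GaltonWatson

theorem inverse_W_necessary_general
    {Ω : Type*} [MeasurableSpace Ω] (P : Measure Ω) [IsProbabilityMeasure P]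
    -- the offspring variables `ν_x` and the edge weights `ξ_x`
    (ν : List ℕ → Ω → ℕ) (ξ : List ℕ → Ω → ℝ)
    (hmν : ∀ x, Measurable (ν x)) (hmξ : ∀ x, Measurable (ξ x))
    -- the two families are i.i.d. and globally independent
    (hindep : iIndepFun (pairFam ν ξ) P)
    (hidξ : ∀ x, IdentDistrib (ξ x) (ξ root) P P)
    -- `ν` takes values in the positive integers and `ξ` is strictly positive
    (hνpos : ∀ x, ∀ᵐ ω ∂P, 0 < ν x ω)
    (hξpos : ∀ x, ∀ᵐ ω ∂P, 0 < ξ x ω)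
    -- the mean offspring number `m = E[ν]` satisfies `1 < m`
    (m : ℝ) (hm1 : 1 < m)
    (hξinv : Integrable (fun ω => (ξ root ω)⁻¹) P)
    -- `W` is the a.s. limit of the martingale `W_n = m⁻ⁿ #T_n`
    (W : Ω → ℝ)
    (hW : ∀ᵐ ω ∂P, Tendsto (fun n => (m ^ n)⁻¹ * (tcount ν n root ω : ℝ)) atTop (𝓝 (W ω)))
    :
    (∫⁻ ω, ENNReal.ofReal ((W ω)⁻¹) ∂P) / ENNReal.ofReal (∫ ω, (ξ root ω)⁻¹ ∂P) ≤
      atTop.liminf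
        fun n : ℕ => (∫⁻ ω, ENNReal.ofReal ((gwCond m ν ξ n root ω)⁻¹) ∂P) / (n : ℝ≥0∞) := by
  have hm : 0 < m := one_pos.trans hm1
  have hν : ∀ᵐ ω ∂P, ∀ y, 0 < ν y ω := ae_all_iff.2 hνpos
  have hξ : ∀ᵐ ω ∂P, ∀ y, 0 < ξ y ω := ae_all_iff.2 hξpos
  rw [ofReal_integral_eq_lintegral_ofReal hξinv ((hξpos root).mono fun ω h => (inv_pos.2 h).le)]
  set D := ∫⁻ ω, ENNReal.ofReal (ξ root ω)⁻¹ ∂P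
  have hD (y : List ℕ) : ∫⁻ ω, ENNReal.ofReal (ξ y ω)⁻¹ ∂P ≤ D :=
    ((hidξ y).comp (ENNReal.measurable_ofReal.comp measurable_inv)).lintegral_eq.le
  set B : ℕ → ℝ≥0∞ := fun j => ∫⁻ ω, ENNReal.ofReal (m ^ j / tcount ν j root ω) ∂P
  calc (∫⁻ ω, ENNReal.ofReal (W ω)⁻¹ ∂P) / D
      ≤ (atTop.liminf fun n : ℕ => (∑ k ∈ Finset.range n, B (k + 1)) / n) * D⁻¹ := by
        rw [div_eq_mul_inv]
        gcongr
        exact (lintegral_ofReal_inv_le_liminf_pow_div_tcount hmν hW).trans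
          (ENNReal.liminf_le_liminf_cesaro _)
    _ ≤ atTop.liminf fun n : ℕ => (∑ k ∈ Finset.range n, B (k + 1)) / n * D⁻¹ :=
        ENNReal.liminf_mul_const_le _ _
    _ ≤ _ := liminf_le_liminf (.of_forall fun n => by
        rw [div_eq_mul_inv, div_eq_mul_inv, mul_right_comm]
        gcongr
        exact sum_lintegral_pow_div_tcount_mul_inv_le hm hmν hmξ hindep hν hξ hD n root)

/-- Necessity of the integrability of `1/W`: `liminf E[R_n]/n ≥ E[W⁻¹]/E[ξ⁻¹]` (both sides possibly infinite). -/
theorem inverse_W_necessary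
    {Ω : Type*} [MeasurableSpace Ω] (P : Measure Ω) [IsProbabilityMeasure P]
    -- the offspring variables `ν_x` and the edge weights `ξ_x`
    (ν : List ℕ → Ω → ℕ) (ξ : List ℕ → Ω → ℝ)
    (hmν : ∀ x, Measurable (ν x)) (hmξ : ∀ x, Measurable (ξ x))
    -- the two families are i.i.d. and globally independent
    (hindep : iIndepFun (pairFam ν ξ) P)
    (hidν : ∀ x, IdentDistrib (ν x) (ν root) P P)
    (hidξ : ∀ x, IdentDistrib (ξ x) (ξ root) P P)
    -- `ν` takes values in the positive integers and `ξ` is strictly positive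
    (hνpos : ∀ x, ∀ᵐ ω ∂P, 0 < ν x ω)
    (hξpos : ∀ x, ∀ᵐ ω ∂P, 0 < ξ x ω)
    -- the mean offspring number `m = E[ν]` satisfies `1 < m`
    (hνint : Integrable (fun ω => (ν root ω : ℝ)) P)
    (m : ℝ) (hm : m = ∫ ω, (ν root ω : ℝ) ∂P) (hm1 : 1 < m)
    (hξinv : Integrable (fun ω => (ξ root ω)⁻¹) P)
    -- `W` is the a.s. limit of the martingale `W_n = m⁻ⁿ #T_n`
    (W : Ω → ℝ)
    (hW : ∀ᵐ ω ∂P, Tendsto (fun n => (m ^ n)⁻¹ * (tcount ν n root ω : ℝ)) atTop (𝓝 (W ω)))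
    :
    (∫⁻ ω, ENNReal.ofReal ((W ω)⁻¹) ∂P) / ENNReal.ofReal (∫ ω, (ξ root ω)⁻¹ ∂P) ≤
      atTop.liminf
        fun n : ℕ => (∫⁻ ω, ENNReal.ofReal ((gwCond m ν ξ n root ω)⁻¹) ∂P) / (n : ℝ≥0∞) :=
  inverse_W_necessary_general P ν ξ hmν hmξ hindep hidξ hνpos hξpos m hm1 hξinv W hW
end
end
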